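/- arXiv:2508.00156 — 2 statements merged into one kernel-verified Lean document; each statement's English description precedes it below -/
import Mathlib

section
/- Let β be the bearing angle from pᵢ to pⱼ, i.e., (cos β, sin β) = (pⱼ − pᵢ)/‖pⱼ − pᵢ‖, and let Δ = arccos(min(1, α·h/(4v‖pᵢ − pⱼ‖))) with h = ‖pᵢ − pⱼ‖² − r² ≥ 0. Then the CBF condition g(pᵢ, pⱼ, θ) = (α/2)h + 2v⟨pᵢ − pⱼ, (cos θ, sin θ)⟩ ≥ 0 holds if and only if |∠(θ − β)| ≥ Δ (with equality allowed). -/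
/-!
Writing `pᵢ - pⱼ = -‖pᵢ - pⱼ‖ (cos β, sin β)` turns the CBF condition into
`cos (θ - β) ≤ c` with `c = α h / (4 v ‖pᵢ - pⱼ‖) ≥ 0`. Since `|∠(θ - β)| ∈ [0, π]` has the
same cosine as `θ - β` and `cos` is decreasing on `[0, π]` with inverse `arccos`, this is
`arccos (min 1 c) ≤ |∠(θ - β)|`; the `min 1` only matters when `c > 1`, where both sides hold.
-/

/-- Angular normalization into `[−π, π)`. -/
noncomputable def angNorm (a : ℝ) : ℝ :=
  toIcoMod Real.two_pi_pos 0 (a + Real.pi) - Real.pi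

section

open Real

lemma cos_angNorm (x : ℝ) : cos (angNorm x) = cos x := by
  have hshift : angNorm x = x - (toIcoDiv two_pi_pos 0 (x + π) : ℝ) * (2 * π) := by
    rw [angNorm, toIcoMod, zsmul_eq_mul]
    ring
  rw [hshift, cos_sub_int_mul_two_pi]

lemma abs_angNorm_le_pi (x : ℝ) : |angNorm x| ≤ π := by
  obtain ⟨hlo, hhi⟩ := toIcoMod_mem_Ico' two_pi_pos (x + π)
  rw [angNorm, abs_le]
  constructor <;> linarith

lemma arccos_min_one_le_iff_cos_le {c y : ℝ} (hc : -1 ≤ c) (hy₀ : 0 ≤ y) (hyπ : y ≤ π) :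
    arccos (min 1 c) ≤ y ↔ cos y ≤ c := by
  constructor
  · intro h
    have hcos := cos_le_cos_of_nonneg_of_le_pi (arccos_nonneg _) hyπ h
    rw [cos_arccos (le_min (by norm_num) hc) (min_le_left _ _)] at hcos
    exact hcos.trans (min_le_right _ _)
  · intro h
    calc arccos (min 1 c) ≤ arccos (cos y) := antitone_arccos (le_min (cos_le_one y) h)
      _ = y := arccos_cos hy₀ hyπ

lemma arccos_min_one_le_abs_angNorm_iff {c : ℝ} (hc : -1 ≤ c) (x : ℝ) :
    arccos (min 1 c) ≤ |angNorm x| ↔ cos x ≤ c := by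
  rw [arccos_min_one_le_iff_cos_le hc (abs_nonneg _) (abs_angNorm_le_pi x), cos_abs,
    cos_angNorm]

lemma sub_eq_neg_norm_smul_of_bearing {p q : ℝ × ℝ} {β : ℝ}
    (hβ : (cos β, sin β) = ‖q - p‖⁻¹ • (q - p)) :
    p - q = -(‖p - q‖ • (cos β, sin β)) := by
  rcases eq_or_ne p q with rfl | hpq
  · simp
  have hnorm : ‖q - p‖ ≠ 0 := norm_ne_zero_iff.mpr (sub_ne_zero.mpr hpq.symm)
  rw [hβ, smul_smul, norm_sub_rev p q, mul_inv_cancel₀ hnorm, one_smul, neg_sub]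

lemma coord_mul_cos_add_coord_mul_sin_of_bearing {p q : ℝ × ℝ} {β : ℝ}
    (hβ : (cos β, sin β) = ‖q - p‖⁻¹ • (q - p)) (θ : ℝ) :
    (p.1 - q.1) * cos θ + (p.2 - q.2) * sin θ = -(‖p - q‖ * cos (θ - β)) := by
  obtain ⟨h₁, h₂⟩ := Prod.ext_iff.mp (sub_eq_neg_norm_smul_of_bearing hβ)
  simp only [Prod.fst_sub, Prod.snd_sub, Prod.fst_neg, Prod.snd_neg, Prod.smul_fst,
    Prod.smul_snd, smul_eq_mul] at h₁ h₂
  rw [h₁, h₂, cos_sub]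
  ring

lemma nonneg_add_mul_neg_mul_iff {v d a x : ℝ} (hv : 0 < v) (hd : 0 < d) :
    0 ≤ a / 2 + 2 * v * -(d * x) ↔ x ≤ a / (4 * v * d) := by
  rw [le_div_iff₀ (by positivity)]
  constructor <;> intro h <;> nlinarith

end

open Real in
theorem cbf_condition_iff_angle_general
    (v α r : ℝ) (hv : 0 < v) (hα : 0 < α) (hr : 0 < r)
    (pi pj : ℝ × ℝ) (hsep : r ≤ ‖pi - pj‖)
    (θ β : ℝ)
    (hβ : (cos β, sin β) = ‖pj - pi‖⁻¹ • (pj - pi)) :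
    0 ≤ α / 2 * (‖pi - pj‖ ^ 2 - r ^ 2)
        + 2 * v * ((pi.1 - pj.1) * cos θ + (pi.2 - pj.2) * sin θ)
    ↔ arccos (min 1 (α * (‖pi - pj‖ ^ 2 - r ^ 2) / (4 * v * ‖pi - pj‖)))
        ≤ |angNorm (θ - β)| := by
  have hd : 0 < ‖pi - pj‖ := hr.trans_le hsep
  have hh : 0 ≤ ‖pi - pj‖ ^ 2 - r ^ 2 := by nlinarith
  have hc : 0 ≤ α * (‖pi - pj‖ ^ 2 - r ^ 2) / (4 * v * ‖pi - pj‖) := by positivity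
  rw [coord_mul_cos_add_coord_mul_sin_of_bearing hβ, ← mul_div_right_comm,
    nonneg_add_mul_neg_mul_iff hv hd, arccos_min_one_le_abs_angNorm_iff (by linarith)]

open Real in
/-- The decentralized CBF condition `g(pᵢ, pⱼ, θ) ≥ 0` holds iff the heading
deviates from the bearing angle `β` by at least
`Δ = arccos (min 1 (α h / (4 v ‖pᵢ − pⱼ‖)))`. -/
theorem cbf_condition_iff_angle
    (v α r : ℝ) (hv : 0 < v) (hα : 0 < α) (hr : 0 < r)
    (pi pj : ℝ × ℝ) (hne : pi ≠ pj) (hsep : r ≤ ‖pi - pj‖)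
    (θ β : ℝ)
    (hβ : (cos β, sin β) = ‖pj - pi‖⁻¹ • (pj - pi)) :
    0 ≤ α / 2 * (‖pi - pj‖ ^ 2 - r ^ 2)
        + 2 * v * ((pi.1 - pj.1) * cos θ + (pi.2 - pj.2) * sin θ)
    ↔ arccos (min 1 (α * (‖pi - pj‖ ^ 2 - r ^ 2) / (4 * v * ‖pi - pj‖)))
        ≤ |angNorm (θ - β)| :=
  cbf_condition_iff_angle_general v α r hv hα hr pi pj hsep θ β hβ
end

section
/- The minimizer of (1/2)|θˢ − θ*|² subject to the constraint |∠(θˢ − β)| ≥ Δ (where Δ ∈ [0, π/2]) is: θˢ = θ* if |∠(θ* − β)| ≥ Δ; θˢ = β − Δ if ∠(θ* − β) ∈ (−Δ, 0); and θˢ = β + Δ if ∠(θ* − β) ∈ [0, Δ) (choosing β + Δ at the tie ∠(θ* − β) = 0), where distance is measured modulo 2π. -/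
open Real

lemma coe_angNorm (a : ℝ) : ((angNorm a : ℝ) : Angle) = a := by
  rw [angNorm, Angle.coe_sub, Angle.coe_toIcoMod, ← Angle.coe_sub, add_sub_cancel_right]

lemma angNorm_mem_Ico (a : ℝ) : angNorm a ∈ Set.Ico (-π) π := by
  have h := toIcoMod_mem_Ico two_pi_pos 0 (a + π)
  rw [zero_add] at h
  exact ⟨by unfold angNorm; linarith [h.1], by unfold angNorm; linarith [h.2]⟩

lemma Real.Angle.norm_coe_of_abs_le {x : ℝ} (h : |x| ≤ π) : ‖(x : Angle)‖ = |x| :=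
  (AddCircle.norm_coe_eq_abs_iff _ two_pi_pos.ne').2 <| by
    rwa [abs_of_pos two_pi_pos, mul_div_cancel_left₀ _ two_ne_zero]

lemma abs_angNorm (a : ℝ) : |angNorm a| = ‖(a : Angle)‖ := by
  obtain ⟨hlo, hhi⟩ := angNorm_mem_Ico a
  rw [← coe_angNorm a, Angle.norm_coe_of_abs_le (abs_le.2 ⟨hlo, hhi.le⟩)]

lemma abs_angNorm_of_abs_le {x : ℝ} (h : |x| ≤ π) : |angNorm x| = |x| := by
  rw [abs_angNorm, Angle.norm_coe_of_abs_le h]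

lemma abs_angNorm_sub_sub_le (a b c : ℝ) :
    |angNorm (a - c)| - |angNorm (b - c)| ≤ |angNorm (a - b)| := by
  simpa only [abs_angNorm, Angle.coe_sub, sub_sub_sub_cancel_right] using
    norm_sub_norm_le ((a : Angle) - c) ((b : Angle) - c)

lemma abs_angNorm_sub_eq {a b c : ℝ} (h : |a - c - angNorm (b - c)| ≤ π) :
    |angNorm (a - b)| = |a - c - angNorm (b - c)| := by
  rw [abs_angNorm, ← Angle.norm_coe_of_abs_le h, Angle.coe_sub (a - c), coe_angNorm,
    ← Angle.coe_sub, sub_sub_sub_cancel_right]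

/-- Explicit solution of the safety filter: the minimizer of the angular
distance to `θ*` subject to the safety constraint `|∠(θˢ − β)| ≥ Δ` is `θ*`
itself if it is safe, and otherwise the nearer of `β ± Δ` (choosing `β + Δ`
at the tie `∠(θ* − β) = 0`).  The filtered angle is safe, and it is at least
as close (in angular distance) to `θ*` as any other safe heading. -/
theorem safety_filter_explicit_solution
    (θs θstar β Δ : ℝ) (hΔ : Δ ∈ Set.Icc 0 (Real.pi / 2))
    (hdef : θs =
      if Δ ≤ |angNorm (θstar - β)| then θstar
      else if angNorm (θstar - β) < 0 then β - Δ
      else β + Δ) :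
    Δ ≤ |angNorm (θs - β)| ∧
      ∀ θ : ℝ, Δ ≤ |angNorm (θ - β)| →
        |angNorm (θs - θstar)| ≤ |angNorm (θ - θstar)| := by
  obtain ⟨hΔ0, hΔπ⟩ := hΔ
  have hπ := pi_pos
  have dist_ge (θ : ℝ) (hθ : Δ ≤ |angNorm (θ - β)|) :
      Δ - |angNorm (θstar - β)| ≤ |angNorm (θ - θstar)| :=
    (sub_le_sub_right hθ _).trans (abs_angNorm_sub_sub_le θ θstar β)
  split_ifs at hdef with hsafe hneg <;> subst hdef
  · refine ⟨hsafe, fun θ _ => ?_⟩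
    rw [sub_self, abs_angNorm_of_abs_le (by simpa using hπ.le), abs_zero]
    exact abs_nonneg _
  · obtain ⟨hlo, -⟩ := abs_lt.1 (not_le.1 hsafe)
    rw [abs_angNorm_sub_eq (b := θstar) (c := β) (abs_le.2 ⟨by linarith, by linarith⟩),
      sub_sub_cancel_left,
      abs_angNorm_of_abs_le (by rw [abs_neg, abs_of_nonneg hΔ0]; linarith), abs_neg,
      abs_of_nonneg hΔ0, abs_of_neg (by linarith)]
    refine ⟨le_rfl, fun θ hθ => ?_⟩
    linarith [dist_ge θ hθ, abs_of_neg hneg]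
  · obtain ⟨-, hhi⟩ := abs_lt.1 (not_le.1 hsafe)
    rw [abs_angNorm_sub_eq (b := θstar) (c := β) (abs_le.2 ⟨by linarith, by linarith⟩),
      add_sub_cancel_left,
      abs_angNorm_of_abs_le (by rw [abs_of_nonneg hΔ0]; linarith), abs_of_nonneg hΔ0,
      abs_of_nonneg (by linarith)]
    refine ⟨le_rfl, fun θ hθ => ?_⟩
    linarith [dist_ge θ hθ, abs_of_nonneg (not_lt.1 hneg)]
end
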